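/- arXiv:2306.00798 — 3 statements merged into one kernel-verified Lean document; each statement's English description precedes it below -/
import Mathlib

section
/- Let f be a real-valued function on density matrices (of all finite dimensions) that is additive over tensor products, invariant under conjugation by permutation unitaries on tensor-product spaces, and satisfies the Lipschitz-type continuity bound |f(ρ) - f(σ)| ≤ K·‖ρ-σ‖₁·(log d)^α + η(‖ρ-σ‖₁) for all d and all ρ, σ ∈ D(ℂ^d), where α < 1, K > 0, and η is a function with η(0) = 0 that is continuous at 0. Then f(ρ) = f(σ) for all ρ, σ of equal dimension, i.e., f is constant on each dimension. -/
open Matrix Kronecker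
open scoped ComplexOrder Classical

/-- A density operator: positive semidefinite with unit trace. -/
def IsDensity {ι : Type} [Fintype ι] (A : Matrix ι ι ℂ) : Prop :=
  A.PosSemidef ∧ A.trace = 1

/-- The trace norm (Schatten 1-norm) of a Hermitian matrix: the sum of the
absolute values of its eigenvalues. -/
noncomputable def traceNorm {ι : Type} [Fintype ι] [DecidableEq ι]
    (A : Matrix ι ι ℂ) : ℝ :=
  if h : A.IsHermitian then ∑ i, |h.eigenvalues i| else 0

/-!
Let `ω` be the average over `k ≤ m` of `ρ^{⊗k} ⊗ σ^{⊗(m-k)}`. After a cyclic shift of the tensor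
factors, `ρ ⊗ ω` and `σ ⊗ ω` are averages of the same states `ρ^{⊗k} ⊗ σ^{⊗(m+1-k)}` except for
one term each, so they are at trace distance at most `2 / (m + 1)`. Additivity and permutation
invariance give `f ρ - f σ = f (ρ ⊗ ω) - f (σ ⊗ ω)`, which the continuity bound on `m + 1` copies
of the space bounds by `K t ((m + 1) log d) ^ α + η t` with `t ≤ 2 / (m + 1)`. This tends to `0`
because `α < 1`.
-/

section TraceNorm

variable {n : Type} [Fintype n] [DecidableEq n]

lemma traceNorm_nonneg (A : Matrix n n ℂ) : 0 ≤ traceNorm A := by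
  unfold traceNorm
  split
  · exact Finset.sum_nonneg fun i _ => abs_nonneg _
  · exact le_rfl

lemma traceNorm_sub_le {A B : Matrix n n ℂ} (hA : A.PosSemidef) (hB : B.PosSemidef) :
    traceNorm (A - B) ≤ A.trace.re + B.trace.re := by
  have h : (A - B).IsHermitian := hA.1.sub hB.1
  set U : Matrix n n ℂ := (h.eigenvectorUnitary : Matrix n n ℂ)
  have hUU : U * star U = 1 := mem_unitaryGroup_iff.mp h.eigenvectorUnitary.2
  have hA' : (star U * A * U).PosSemidef := by
    simpa [star_eq_conjTranspose] using hA.conjTranspose_mul_mul_same U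
  have hB' : (star U * B * U).PosSemidef := by
    simpa [star_eq_conjTranspose] using hB.conjTranspose_mul_mul_same U
  -- conjugation by `U` diagonalises `A - B`
  have heig (i : n) :
      h.eigenvalues i = ((star U * A * U) i i).re - ((star U * B * U) i i).re := by
    have hdiag : star U * A * U - star U * B * U = diagonal (RCLike.ofReal ∘ h.eigenvalues) := by
      rw [← sub_mul, ← mul_sub, ← h.conjStarAlgAut_star_eigenvectorUnitary,
        Unitary.conjStarAlgAut_star_apply]
    simpa using congrArg (fun M => (M i i).re) hdiag.symm
  have hconj (C : Matrix n n ℂ) : (star U * C * U).trace = C.trace := by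
    rw [trace_mul_cycle, hUU, one_mul]
  rw [traceNorm, dif_pos h, ← hconj A, ← hconj B, trace, trace, Complex.re_sum, Complex.re_sum,
    ← Finset.sum_add_distrib]
  refine Finset.sum_le_sum fun i _ => ?_
  have ha := (Complex.nonneg_iff.mp (hA'.diag_nonneg (i := i))).1
  have hb := (Complex.nonneg_iff.mp (hB'.diag_nonneg (i := i))).1
  rw [heig i, diag_apply, diag_apply]
  exact (abs_sub _ _).trans_eq (by rw [abs_of_nonneg ha, abs_of_nonneg hb])

end TraceNorm

namespace IsDensity

variable {ι κ : Type} [Fintype ι] [Fintype κ]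

lemma kronecker {A : Matrix ι ι ℂ} {B : Matrix κ κ ℂ} (hA : IsDensity A) (hB : IsDensity B) :
    IsDensity (A ⊗ₖ B) :=
  ⟨hA.1.kronecker hB.1, by rw [trace_kronecker, hA.2, hB.2, one_mul]⟩

lemma reindex {A : Matrix ι ι ℂ} (hA : IsDensity A) (e : ι ≃ κ) :
    IsDensity (Matrix.reindex e e A) :=
  ⟨hA.1.submatrix _, by simpa [trace, Equiv.sum_comp e.symm (fun i => A i i)] using hA.2⟩

lemma average {α : Type} {s : Finset α} (hs : s.Nonempty) {D : α → Matrix ι ι ℂ}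
    (hD : ∀ k ∈ s, IsDensity (D k)) : IsDensity ((s.card : ℝ)⁻¹ • ∑ k ∈ s, D k) := by
  refine ⟨(posSemidef_sum s fun k hk => (hD k hk).1).smul (by positivity), ?_⟩
  rw [trace_smul, trace_sum, Finset.sum_congr rfl fun k hk => (hD k hk).2]
  simp [hs.card_ne_zero]

end IsDensity

section PiKronecker

variable {R ι : Type} [CommSemiring R] {m : ℕ}

def Matrix.piKronecker (A : Fin m → Matrix ι ι R) : Matrix (Fin m → ι) (Fin m → ι) R :=
  of fun i j => ∏ t, A t (i t) (j t)

lemma reindex_kronecker_piKronecker_tail (A : Fin (m + 1) → Matrix ι ι R) :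
    reindex (Fin.consEquiv fun _ => ι) (Fin.consEquiv fun _ => ι)
      (A 0 ⊗ₖ piKronecker (Fin.tail A)) = piKronecker A := by
  ext i j
  simp [piKronecker, Fin.prod_univ_succ, Fin.tail]

lemma reindex_kronecker_piKronecker_init (A : Fin (m + 1) → Matrix ι ι R) :
    reindex (Fin.snocEquiv fun _ => ι) (Fin.snocEquiv fun _ => ι)
      (A (Fin.last m) ⊗ₖ piKronecker (Fin.init A)) = piKronecker A := by
  ext i j
  simp [piKronecker, Fin.prod_univ_castSucc, Fin.init, mul_comm]

end PiKronecker

lemma IsDensity.piKronecker {ι : Type} [Fintype ι] {m : ℕ} {A : Fin m → Matrix ι ι ℂ}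
    (hA : ∀ t, IsDensity (A t)) : IsDensity (Matrix.piKronecker A) := by
  induction m with
  | zero =>
    have : Matrix.piKronecker A = 1 := by
      ext i j
      rw [Subsingleton.elim i j]
      simp [Matrix.piKronecker]
    rw [this]
    exact ⟨PosSemidef.one, by simp⟩
  | succ m ih =>
    rw [← reindex_kronecker_piKronecker_tail]
    exact ((hA 0).kronecker (ih fun t => hA t.succ)).reindex _

section Catalyst

variable {ι : Type} (ρ σ : Matrix ι ι ℂ)

def stairState (m k : ℕ) : Matrix (Fin m → ι) (Fin m → ι) ℂ :=
  Matrix.piKronecker fun t : Fin m => if (t : ℕ) < k then ρ else σ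

noncomputable def catalyst (m : ℕ) : Matrix (Fin m → ι) (Fin m → ι) ℂ :=
  ((m : ℝ) + 1)⁻¹ • ∑ k ∈ Finset.range (m + 1), stairState ρ σ m k

variable {ρ σ}

lemma IsDensity.stairState [Fintype ι] (hρ : IsDensity ρ) (hσ : IsDensity σ) (m k : ℕ) :
    IsDensity (stairState ρ σ m k) :=
  IsDensity.piKronecker fun t => by split <;> assumption

lemma IsDensity.catalyst [Fintype ι] (hρ : IsDensity ρ) (hσ : IsDensity σ) (m : ℕ) :
    IsDensity (catalyst ρ σ m) := by
  have h := average (Finset.nonempty_range_add_one (n := m)) fun k _ => hρ.stairState hσ m k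
  rwa [Finset.card_range, Nat.cast_add_one] at h

variable (ρ σ)

lemma reindex_kronecker_stairState_succ (m k : ℕ) :
    reindex (Fin.consEquiv fun _ => ι) (Fin.consEquiv fun _ => ι) (ρ ⊗ₖ stairState ρ σ m k) =
      stairState ρ σ (m + 1) (k + 1) := by
  rw [stairState, stairState, ← reindex_kronecker_piKronecker_tail]
  congr
  funext t
  simp [Fin.tail]

lemma reindex_kronecker_stairState_castSucc {m k : ℕ} (hk : k ≤ m) :
    reindex (Fin.snocEquiv fun _ => ι) (Fin.snocEquiv fun _ => ι) (σ ⊗ₖ stairState ρ σ m k) =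
      stairState ρ σ (m + 1) k := by
  rw [stairState, stairState, ← reindex_kronecker_piKronecker_init]
  congr
  simp [hk]

lemma reindex_kronecker_smul_sum {κ μ α : Type} (e : ι × κ ≃ μ) (A : Matrix ι ι ℂ) (c : ℝ)
    (s : Finset α) (D : α → Matrix κ κ ℂ) :
    reindex e e (A ⊗ₖ (c • ∑ k ∈ s, D k)) = c • ∑ k ∈ s, reindex e e (A ⊗ₖ D k) := by
  ext i j
  simp [Matrix.sum_apply, Finset.mul_sum, mul_left_comm]

lemma reindex_kronecker_catalyst_sub (m : ℕ) :
    reindex (Fin.consEquiv fun _ => ι) (Fin.consEquiv fun _ => ι) (ρ ⊗ₖ catalyst ρ σ m) -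
        reindex (Fin.snocEquiv fun _ => ι) (Fin.snocEquiv fun _ => ι) (σ ⊗ₖ catalyst ρ σ m) =
      ((m : ℝ) + 1)⁻¹ • (stairState ρ σ (m + 1) (m + 1) - stairState ρ σ (m + 1) 0) := by
  rw [catalyst, reindex_kronecker_smul_sum, reindex_kronecker_smul_sum, ← smul_sub,
    ← Finset.sum_sub_distrib, ← Finset.sum_range_sub]
  congr 1
  refine Finset.sum_congr rfl fun k hk => ?_
  rw [reindex_kronecker_stairState_succ,
    reindex_kronecker_stairState_castSucc ρ σ (Finset.mem_range_succ_iff.mp hk)]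

variable {ρ σ} [Fintype ι] [DecidableEq ι]

lemma traceNorm_catalyst_sub_le (hρ : IsDensity ρ) (hσ : IsDensity σ) (m : ℕ) :
    traceNorm (reindex (Fin.consEquiv fun _ => ι) (Fin.consEquiv fun _ => ι)
        (ρ ⊗ₖ catalyst ρ σ m) -
      reindex (Fin.snocEquiv fun _ => ι) (Fin.snocEquiv fun _ => ι) (σ ⊗ₖ catalyst ρ σ m)) ≤
      2 / ((m : ℝ) + 1) := by
  have hc : (0 : ℝ) ≤ ((m : ℝ) + 1)⁻¹ := by positivity
  have hstair := hρ.stairState hσ (m + 1)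
  rw [reindex_kronecker_catalyst_sub, smul_sub]
  refine (traceNorm_sub_le ((hstair _).1.smul hc) ((hstair _).1.smul hc)).trans_eq ?_
  simp only [trace_smul, (hstair _).2, Complex.real_smul, mul_one, Complex.ofReal_re]
  ring

end Catalyst

open Filter Topology in
lemma tendsto_catalyst_bound (K : ℝ) {α L : ℝ} (hα : α < 1) (hL : 0 ≤ L) {η : ℝ → ℝ} (hη0 : η 0 = 0)
    (hη : ContinuousAt η 0) {t : ℕ → ℝ} (ht0 : ∀ m, 0 ≤ t m) (ht : ∀ m, t m ≤ 2 / ((m : ℝ) + 1)) :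
    Tendsto (fun m : ℕ => K * t m * (((m : ℝ) + 1) * L) ^ α + η (t m)) atTop (𝓝 0) := by
  have hm : Tendsto (fun m : ℕ => (m : ℝ) + 1) atTop atTop :=
    tendsto_atTop_add_const_right _ 1 tendsto_natCast_atTop_atTop
  have ht_lim : Tendsto t atTop (𝓝 0) := squeeze_zero ht0 ht (hm.const_div_atTop 2)
  have hscaled : Tendsto (fun m : ℕ => t m * ((m : ℝ) + 1) ^ α) atTop (𝓝 0) := by
    refine squeeze_zero (g := fun m : ℕ => 2 * ((m : ℝ) + 1) ^ (α - 1))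
      (fun m => mul_nonneg (ht0 m) (by positivity)) (fun m => ?_) ?_
    · have hpos : (0 : ℝ) < (m : ℝ) + 1 := by positivity
      calc t m * ((m : ℝ) + 1) ^ α ≤ 2 / ((m : ℝ) + 1) * ((m : ℝ) + 1) ^ α := by gcongr; exact ht m
        _ = 2 * ((m : ℝ) + 1) ^ (α - 1) := by rw [Real.rpow_sub_one hpos.ne']; ring
    · simpa using ((tendsto_rpow_neg_atTop (by linarith : 0 < 1 - α)).comp hm).const_mul 2
  have hsplit (m : ℕ) :
      K * t m * (((m : ℝ) + 1) * L) ^ α = K * L ^ α * (t m * ((m : ℝ) + 1) ^ α) := by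
    rw [Real.mul_rpow (by positivity) hL]
    ring
  simp_rw [hsplit]
  simpa [hη0] using (hscaled.const_mul (K * L ^ α)).add (hη0 ▸ hη.tendsto.comp ht_lim)

def TensorAdditive (f : ∀ (ι : Type) [Fintype ι] [DecidableEq ι], Matrix ι ι ℂ → ℝ) : Prop :=
  ∀ (ι κ : Type) [Fintype ι] [DecidableEq ι] [Fintype κ] [DecidableEq κ]
    (ρ : Matrix ι ι ℂ) (ω : Matrix κ κ ℂ), IsDensity ρ → IsDensity ω →
    f (ι × κ) (ρ ⊗ₖ ω) = f ι ρ + f κ ω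

def PermutationInvariant (f : ∀ (ι : Type) [Fintype ι] [DecidableEq ι], Matrix ι ι ℂ → ℝ) :
    Prop :=
  ∀ (ι κ : Type) [Fintype ι] [DecidableEq ι] [Fintype κ] [DecidableEq κ]
    (e : ι ≃ κ) (A : Matrix ι ι ℂ), IsDensity A → f κ (Matrix.reindex e e A) = f ι A

lemma sub_eq_sub_of_catalyst {f : ∀ (ι : Type) [Fintype ι] [DecidableEq ι], Matrix ι ι ℂ → ℝ}
    (hadd : TensorAdditive f) (hperm : PermutationInvariant f)
    {ι κ μ : Type} [Fintype ι] [DecidableEq ι] [Fintype κ] [DecidableEq κ] [Fintype μ]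
    [DecidableEq μ] {ρ σ : Matrix ι ι ℂ} {ω : Matrix κ κ ℂ}
    (hρ : IsDensity ρ) (hσ : IsDensity σ) (hω : IsDensity ω) (e e' : ι × κ ≃ μ) :
    f ι ρ - f ι σ = f μ (reindex e e (ρ ⊗ₖ ω)) - f μ (reindex e' e' (σ ⊗ₖ ω)) := by
  rw [hperm _ _ e _ (hρ.kronecker hω), hperm _ _ e' _ (hσ.kronecker hω), hadd _ _ _ _ hρ hω,
    hadd _ _ _ _ hσ hω, add_sub_add_right_eq_sub]

lemma Real.log_card_fin_fun (ι : Type) [Fintype ι] (m : ℕ) :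
    Real.log (Fintype.card (Fin m → ι)) = m * Real.log (Fintype.card ι) := by
  simp [Real.log_pow]

theorem no_more_than_asymptotic_continuity_general
    (f : ∀ (ι : Type) [Fintype ι] [DecidableEq ι], Matrix ι ι ℂ → ℝ)
    (hadd : ∀ (ι κ : Type) [Fintype ι] [DecidableEq ι] [Fintype κ] [DecidableEq κ]
      (ρ : Matrix ι ι ℂ) (ω : Matrix κ κ ℂ), IsDensity ρ → IsDensity ω →
      f (ι × κ) (ρ ⊗ₖ ω) = f ι ρ + f κ ω)
    (hperm : ∀ (ι κ : Type) [Fintype ι] [DecidableEq ι] [Fintype κ] [DecidableEq κ]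
      (e : ι ≃ κ) (A : Matrix ι ι ℂ), IsDensity A →
      f κ (Matrix.reindex e e A) = f ι A)
    (K α : ℝ) (hα : α < 1)
    (η : ℝ → ℝ) (hη0 : η 0 = 0) (hηcont : ContinuousAt η 0)
    (hcont : ∀ (ι : Type) [Fintype ι] [DecidableEq ι] (ρ σ : Matrix ι ι ℂ),
      IsDensity ρ → IsDensity σ →
      |f ι ρ - f ι σ| ≤
        K * traceNorm (ρ - σ) * Real.log (Fintype.card ι) ^ α
          + η (traceNorm (ρ - σ)))
    {ι : Type} [Fintype ι] [DecidableEq ι] (ρ σ : Matrix ι ι ℂ)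
    (hρ : IsDensity ρ) (hσ : IsDensity σ) :
    f ι ρ = f ι σ := by
  set t : ℕ → ℝ := fun m =>
    traceNorm (reindex (Fin.consEquiv fun _ => ι) (Fin.consEquiv fun _ => ι)
        (ρ ⊗ₖ catalyst ρ σ m) -
      reindex (Fin.snocEquiv fun _ => ι) (Fin.snocEquiv fun _ => ι) (σ ⊗ₖ catalyst ρ σ m))
  have hbound (m : ℕ) : |f ι ρ - f ι σ| ≤
      K * t m * (((m : ℝ) + 1) * Real.log (Fintype.card ι)) ^ α + η (t m) := by
    have hω := hρ.catalyst hσ m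
    rw [sub_eq_sub_of_catalyst hadd hperm hρ hσ hω (Fin.consEquiv fun _ => ι)
      (Fin.snocEquiv fun _ => ι), ← Nat.cast_add_one, ← Real.log_card_fin_fun]
    exact hcont _ _ _ ((hρ.kronecker hω).reindex _) ((hσ.kronecker hω).reindex _)
  have hlim := tendsto_catalyst_bound K hα (Real.log_natCast_nonneg (Fintype.card ι)) hη0 hηcont
    (fun m => traceNorm_nonneg _) (traceNorm_catalyst_sub_le hρ hσ)
  exact sub_eq_zero.mp (abs_nonpos_iff.mp (ge_of_tendsto' hlim hbound))

/-- A function on density matrices of all finite dimensions that is additive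
over tensor products, invariant under conjugation by permutation unitaries on
tensor-product spaces (i.e. under relabelings/permutations of the product
basis, expressed as reindexing along bijections), and "more than
asymptotically continuous" (Lipschitz-type bound with exponent `α < 1` in
`log d`) must be constant on the density matrices of each dimension. -/
theorem no_more_than_asymptotic_continuity
    (f : ∀ (ι : Type) [Fintype ι] [DecidableEq ι], Matrix ι ι ℂ → ℝ)
    (hadd : ∀ (ι κ : Type) [Fintype ι] [DecidableEq ι] [Fintype κ] [DecidableEq κ]
      (ρ : Matrix ι ι ℂ) (ω : Matrix κ κ ℂ), IsDensity ρ → IsDensity ω →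
      f (ι × κ) (ρ ⊗ₖ ω) = f ι ρ + f κ ω)
    (hperm : ∀ (ι κ : Type) [Fintype ι] [DecidableEq ι] [Fintype κ] [DecidableEq κ]
      (e : ι ≃ κ) (A : Matrix ι ι ℂ), IsDensity A →
      f κ (Matrix.reindex e e A) = f ι A)
    (K α : ℝ) (hK : 0 < K) (hα : α < 1)
    (η : ℝ → ℝ) (hη0 : η 0 = 0) (hηcont : ContinuousAt η 0)
    (hcont : ∀ (ι : Type) [Fintype ι] [DecidableEq ι] (ρ σ : Matrix ι ι ℂ),
      IsDensity ρ → IsDensity σ →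
      |f ι ρ - f ι σ| ≤
        K * traceNorm (ρ - σ) * Real.log (Fintype.card ι) ^ α
          + η (traceNorm (ρ - σ)))
    {ι : Type} [Fintype ι] [DecidableEq ι] (ρ σ : Matrix ι ι ℂ)
    (hρ : IsDensity ρ) (hσ : IsDensity σ) :
    f ι ρ = f ι σ :=
  no_more_than_asymptotic_continuity_general f hadd hperm K α hα η hη0 hηcont hcont ρ σ hρ hσ
end

section
/- Let U be a unitary on H_S ⊗ H_C, ρ_S a density operator on H_S and ω_C a density operator on H_C. Set τ = U(ρ_S ⊗ ω_C)U† and suppose tr_S[τ] = ω_C. Then H(tr_C[τ]) - H(ρ_S) = I(S:C)_τ, where I(S:C)_τ = H(τ_S) + H(τ_C) - H(τ) is the quantum mutual information. In particular H(tr_C[τ]) ≥ H(ρ_S). -/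
open Matrix Kronecker
open scoped ComplexOrder Classical

/-- The von Neumann entropy `H(ρ) = -tr[ρ log ρ]` of a Hermitian matrix,
expressed through its eigenvalues. -/
noncomputable def vnEntropy {ι : Type} [Fintype ι] [DecidableEq ι]
    (A : Matrix ι ι ℂ) : ℝ :=
  if h : A.IsHermitian then ∑ i, Real.negMulLog (h.eigenvalues i) else 0

/-- Partial trace over the second tensor factor (trace out `C`). -/
noncomputable def trRight {ι κ : Type} [Fintype κ]
    (X : Matrix (ι × κ) (ι × κ) ℂ) : Matrix ι ι ℂ :=
  fun i i' => ∑ j, X (i, j) (i', j)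

/-- Partial trace over the first tensor factor (trace out `S`). -/
noncomputable def trLeft {ι κ : Type} [Fintype ι]
    (X : Matrix (ι × κ) (ι × κ) ℂ) : Matrix κ κ ℂ :=
  fun j j' => ∑ i, X (i, j) (i, j')

/-!
Since `τ` is unitarily conjugate to `ρ_S ⊗ ω_C`, its entropy is `H(ρ_S) + H(ω_C)`; with
`tr_S τ = ω_C` the identity is a rearrangement, and the inequality is subadditivity
`H(τ) ≤ H(τ_S) + H(τ_C)`.

Subadditivity is reduced to the classical case. Conjugating `τ` by the tensor product of
eigenbases of its two marginals makes both marginals diagonal and changes no entropy. The entropy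
of a state is at most the Shannon entropy of its diagonal, because the diagonal is the image of
the spectrum under the doubly stochastic matrix `|V_{ij}|²` and `-x log x` is concave. Finally
the Shannon entropy of a joint distribution is at most the sum of the entropies of its marginals
(Gibbs' inequality), and here those marginals are the spectra of `τ_S` and `τ_C`.
-/

open Polynomial Real

variable {ι κ : Type}

lemma vnEntropy_of_isHermitian [Fintype ι] [DecidableEq ι] {A : Matrix ι ι ℂ}
    (hA : A.IsHermitian) :
    vnEntropy A = ∑ i, negMulLog (hA.eigenvalues i) :=
  dif_pos hA

lemma vnEntropy_eq_of_charpoly_eq_prod [Fintype ι] [DecidableEq ι] [Fintype κ]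
    {A : Matrix ι ι ℂ} (hA : A.IsHermitian) (d : κ → ℝ)
    (h : A.charpoly = ∏ k, (X - C (d k : ℂ))) :
    vnEntropy A = ∑ k, negMulLog (d k) := by
  have hroots := hA.roots_charpoly_eq_eigenvalues
  rw [h, roots_prod _ _ (Finset.prod_ne_zero_iff.mpr fun k _ => X_sub_C_ne_zero _)] at hroots
  have hsum := congrArg (fun s : Multiset ℂ => (s.map fun z => negMulLog z.re).sum) hroots
  simp only [roots_X_sub_C, Multiset.bind_singleton, Multiset.map_map] at hsum
  rw [vnEntropy_of_isHermitian hA, Finset.sum_eq_multiset_sum, Finset.sum_eq_multiset_sum]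
  simpa using hsum.symm

lemma charpoly_unitary_conj [Fintype ι] [DecidableEq ι] {U : Matrix ι ι ℂ}
    (hU : U ∈ unitaryGroup ι ℂ) (A : Matrix ι ι ℂ) :
    (U * A * Uᴴ).charpoly = A.charpoly := by
  rw [charpoly_mul_comm, ← mul_assoc, ← star_eq_conjTranspose, Unitary.star_mul_self_of_mem hU,
    one_mul]

lemma vnEntropy_unitary_conj [Fintype ι] [DecidableEq ι] {U : Matrix ι ι ℂ}
    (hU : U ∈ unitaryGroup ι ℂ) {A : Matrix ι ι ℂ} (hA : A.IsHermitian) :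
    vnEntropy (U * A * Uᴴ) = vnEntropy A :=
  (vnEntropy_eq_of_charpoly_eq_prod (isHermitian_mul_mul_conjTranspose U hA) _
    ((charpoly_unitary_conj hU A).trans hA.charpoly_eq)).trans (vnEntropy_of_isHermitian hA).symm

lemma Matrix.IsHermitian.sum_eigenvalues_eq_one [Fintype ι] [DecidableEq ι] {A : Matrix ι ι ℂ}
    (hA : A.IsHermitian) (htr : A.trace = 1) : ∑ i, hA.eigenvalues i = 1 := by
  simpa [htr] using congrArg Complex.re hA.trace_eq_sum_eigenvalues.symm

lemma Matrix.IsHermitian.kronecker {A : Matrix ι ι ℂ} {B : Matrix κ κ ℂ}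
    (hA : A.IsHermitian) (hB : B.IsHermitian) : (A ⊗ₖ B).IsHermitian := by
  rw [IsHermitian, conjTranspose_kronecker, hA.eq, hB.eq]

lemma charpoly_kronecker_eq_prod [Fintype ι] [DecidableEq ι] [Fintype κ] [DecidableEq κ]
    {A : Matrix ι ι ℂ} {B : Matrix κ κ ℂ} (hA : A.IsHermitian) (hB : B.IsHermitian) :
    (A ⊗ₖ B).charpoly
      = ∏ p : ι × κ, (X - C ((hA.eigenvalues p.1 * hB.eigenvalues p.2 : ℝ) : ℂ)) := by
  have hU := kronecker_mem_unitary hA.eigenvectorUnitary.2 hB.eigenvectorUnitary.2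
  conv_lhs => rw [hA.spectral_theorem, hB.spectral_theorem]
  rw [Unitary.conjStarAlgAut_apply, Unitary.conjStarAlgAut_apply, mul_kronecker_mul,
    mul_kronecker_mul, diagonal_kronecker_diagonal, star_eq_conjTranspose, star_eq_conjTranspose,
    ← conjTranspose_kronecker, charpoly_unitary_conj hU, charpoly_diagonal]
  simp

lemma vnEntropy_kronecker [Fintype ι] [DecidableEq ι] [Fintype κ] [DecidableEq κ]
    {A : Matrix ι ι ℂ} {B : Matrix κ κ ℂ} (hA : A.IsHermitian) (hB : B.IsHermitian)
    (hAtr : A.trace = 1) (hBtr : B.trace = 1) :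
    vnEntropy (A ⊗ₖ B) = vnEntropy A + vnEntropy B := by
  rw [vnEntropy_eq_of_charpoly_eq_prod (hA.kronecker hB) _ (charpoly_kronecker_eq_prod hA hB),
    vnEntropy_of_isHermitian hA, vnEntropy_of_isHermitian hB, Fintype.sum_prod_type]
  simp only [negMulLog_mul, Finset.sum_add_distrib, ← Finset.sum_mul, ← Finset.mul_sum,
    hA.sum_eigenvalues_eq_one hAtr, hB.sum_eigenvalues_eq_one hBtr, one_mul]

lemma normSq_mem_doublyStochastic [Fintype ι] [DecidableEq ι] {U : Matrix ι ι ℂ}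
    (hU : U ∈ unitaryGroup ι ℂ) :
    (of fun i j => Complex.normSq (U i j)) ∈ doublyStochastic ℝ ι := by
  refine mem_doublyStochastic_iff_sum.mpr
    ⟨fun i j => Complex.normSq_nonneg _, fun i => ?_, fun j => ?_⟩
  · have := Matrix.ext_iff.mpr (Unitary.mul_star_self_of_mem hU) i i
    simp only [mul_apply, star_apply, Complex.star_def, Complex.mul_conj, one_apply_eq] at this
    exact_mod_cast this
  · have := Matrix.ext_iff.mpr (Unitary.star_mul_self_of_mem hU) j j
    simp only [mul_apply, star_apply, Complex.star_def, ← Complex.normSq_eq_conj_mul_self,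
      one_apply_eq] at this
    exact_mod_cast this

lemma sum_negMulLog_le_sum_negMulLog_mulVec [Fintype ι] [DecidableEq ι] {M : Matrix ι ι ℝ}
    (hM : M ∈ doublyStochastic ℝ ι) {x : ι → ℝ} (hx : ∀ i, 0 ≤ x i) :
    ∑ i, negMulLog (x i) ≤ ∑ i, negMulLog ((M *ᵥ x) i) :=
  calc ∑ j, negMulLog (x j) = ∑ j, (∑ i, M i j) * negMulLog (x j) := by
        simp [sum_col_of_mem_doublyStochastic hM]
    _ = ∑ i, ∑ j, M i j * negMulLog (x j) := by
        simp_rw [Finset.sum_mul]; exact Finset.sum_comm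
    _ ≤ ∑ i, negMulLog ((M *ᵥ x) i) := Finset.sum_le_sum fun i _ => by
        simpa [mulVec, dotProduct] using concaveOn_negMulLog.le_map_sum
          (fun j _ => nonneg_of_mem_doublyStochastic hM) (sum_row_of_mem_doublyStochastic hM i)
          (fun j _ => hx j)

lemma Matrix.IsHermitian.re_diag_eq_mulVec_eigenvalues [Fintype ι] [DecidableEq ι]
    {A : Matrix ι ι ℂ} (hA : A.IsHermitian) (j : ι) : (A j j).re
      = ((of fun i k => Complex.normSq (hA.eigenvectorUnitary i k)) *ᵥ hA.eigenvalues) j := by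
  conv_lhs => rw [hA.spectral_theorem]
  rw [Unitary.conjStarAlgAut_apply, mul_apply]
  simp only [mul_diagonal, star_apply, Complex.star_def, Function.comp_apply, mulVec, dotProduct,
    of_apply, Complex.re_sum]
  refine Finset.sum_congr rfl fun k _ => ?_
  rw [mul_right_comm, Complex.mul_conj]
  exact Complex.re_ofReal_mul _ _

lemma vnEntropy_le_sum_negMulLog_re_diag [Fintype ι] [DecidableEq ι] {A : Matrix ι ι ℂ}
    (hA : A.PosSemidef) :
    vnEntropy A ≤ ∑ j, negMulLog (A j j).re := by
  simp_rw [vnEntropy_of_isHermitian hA.1, hA.1.re_diag_eq_mulVec_eigenvalues]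
  exact sum_negMulLog_le_sum_negMulLog_mulVec
    (normSq_mem_doublyStochastic hA.1.eigenvectorUnitary.2) hA.eigenvalues_nonneg

-- Termwise Gibbs inequality: `r log (p q / r) ≤ p q - r`.
lemma negMulLog_le_of_le_of_le {r p q : ℝ} (hr : 0 ≤ r) (hrp : r ≤ p) (hrq : r ≤ q) :
    negMulLog r ≤ -(r * log p) - r * log q + (p * q - r) := by
  rcases hr.eq_or_lt with rfl | hr
  · simpa using mul_nonneg hrp hrq
  have hp := hr.trans_le hrp
  have hq := hr.trans_le hrq
  have hlog :=
    mul_le_mul_of_nonneg_left (log_le_sub_one_of_pos (div_pos (mul_pos hp hq) hr)) hr.le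
  rw [log_div (mul_pos hp hq).ne' hr.ne', log_mul hp.ne' hq.ne', mul_sub_one,
    mul_div_cancel₀ _ hr.ne'] at hlog
  rw [negMulLog]
  linarith

lemma sum_negMulLog_le_sum_negMulLog_marginals [Fintype ι] [Fintype κ] (r : ι → κ → ℝ)
    (hr : ∀ a b, 0 ≤ r a b) (hsum : ∑ a, ∑ b, r a b = 1) :
    ∑ a, ∑ b, negMulLog (r a b)
      ≤ ∑ a, negMulLog (∑ b, r a b) + ∑ b, negMulLog (∑ a, r a b) := by
  set p := fun a => ∑ b, r a b
  set q := fun b => ∑ a, r a b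
  have hq : ∑ b, q b = 1 := by rw [Finset.sum_comm]; exact hsum
  calc ∑ a, ∑ b, negMulLog (r a b)
      ≤ ∑ a, ∑ b, (-(r a b * log (p a)) - r a b * log (q b) + (p a * q b - r a b)) :=
        Finset.sum_le_sum fun a _ => Finset.sum_le_sum fun b _ =>
          negMulLog_le_of_le_of_le (hr a b)
          (Finset.single_le_sum (fun b _ => hr a b) (Finset.mem_univ b))
          (Finset.single_le_sum (fun a _ => hr a b) (Finset.mem_univ a))
    _ = ∑ a, negMulLog (p a) + ∑ b, negMulLog (q b)
          + ((∑ a, p a) * ∑ b, q b - ∑ a, p a) := by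
        simp only [Finset.sum_add_distrib, Finset.sum_sub_distrib, Finset.sum_neg_distrib,
          ← Finset.sum_mul, ← Finset.mul_sum, negMulLog, neg_mul]
        rw [Finset.sum_comm (f := fun a b => r a b * log (q b))]
        simp only [← Finset.sum_mul]
        rfl
    _ = ∑ a, negMulLog (p a) + ∑ b, negMulLog (q b) := by rw [hsum, hq]; ring

lemma trace_trRight [Fintype ι] [Fintype κ] (X : Matrix (ι × κ) (ι × κ) ℂ) :
    (trRight X).trace = X.trace := by
  simp [trace, trRight, Fintype.sum_prod_type]

lemma trRight_isHermitian [Fintype κ] {X : Matrix (ι × κ) (ι × κ) ℂ} (hX : X.IsHermitian) :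
    (trRight X).IsHermitian := by
  ext i i'
  simp only [conjTranspose_apply, trRight, star_sum]
  exact Finset.sum_congr rfl fun j _ => hX.apply (i, j) (i', j)

lemma trLeft_eq_trRight_submatrix_swap [Fintype ι] (X : Matrix (ι × κ) (ι × κ) ℂ) :
    trLeft X = trRight (X.submatrix Prod.swap Prod.swap) :=
  rfl

lemma trLeft_isHermitian [Fintype ι] {X : Matrix (ι × κ) (ι × κ) ℂ} (hX : X.IsHermitian) :
    (trLeft X).IsHermitian :=
  trRight_isHermitian (hX.submatrix Prod.swap)

lemma kronecker_submatrix_swap (A : Matrix ι ι ℂ) (B : Matrix κ κ ℂ) :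
    (A ⊗ₖ B).submatrix Prod.swap Prod.swap = B ⊗ₖ A := by
  ext p q
  exact mul_comm _ _

lemma trRight_kronecker_one_mul_mul [Fintype ι] [Fintype κ] [DecidableEq κ]
    (A B : Matrix ι ι ℂ) (X : Matrix (ι × κ) (ι × κ) ℂ) :
    trRight ((A ⊗ₖ (1 : Matrix κ κ ℂ)) * X * (B ⊗ₖ 1)) = A * trRight X * B := by
  ext i i'
  simp only [trRight, mul_apply, kroneckerMap_apply, one_apply, Fintype.sum_prod_type, mul_ite,
    mul_one, mul_zero, ite_mul, zero_mul, Finset.sum_ite_eq, Finset.sum_ite_eq', Finset.mem_univ,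
    if_true, Finset.sum_mul, Finset.mul_sum]
  rw [Finset.sum_comm]
  exact Finset.sum_congr rfl fun _ _ => Finset.sum_comm

lemma trRight_mul_one_kronecker [Fintype ι] [DecidableEq ι] [Fintype κ]
    (X : Matrix (ι × κ) (ι × κ) ℂ) (W : Matrix κ κ ℂ) :
    trRight (X * ((1 : Matrix ι ι ℂ) ⊗ₖ W))
      = trRight (((1 : Matrix ι ι ℂ) ⊗ₖ W) * X) := by
  ext i i'
  simp only [trRight, mul_apply, kroneckerMap_apply, one_apply, Fintype.sum_prod_type, ite_mul,
    one_mul, zero_mul, mul_ite, mul_zero, Finset.sum_ite_irrel, Finset.sum_const_zero,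
    Finset.sum_ite_eq, Finset.sum_ite_eq', Finset.mem_univ, if_true]
  rw [Finset.sum_comm]
  exact Finset.sum_congr rfl fun _ _ => Finset.sum_congr rfl fun _ _ => mul_comm _ _

lemma trRight_conjTranspose_kronecker_mul_mul [Fintype ι] [DecidableEq ι] [Fintype κ]
    [DecidableEq κ] (V : Matrix ι ι ℂ) {W : Matrix κ κ ℂ}
    (hW : W ∈ unitaryGroup κ ℂ) (X : Matrix (ι × κ) (ι × κ) ℂ) :
    trRight ((V ⊗ₖ W)ᴴ * X * (V ⊗ₖ W)) = Vᴴ * trRight X * V := by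
  have hsplit : (V ⊗ₖ W)ᴴ * X * (V ⊗ₖ W)
      = (1 ⊗ₖ Wᴴ) * ((Vᴴ ⊗ₖ 1) * X * (V ⊗ₖ 1)) * (1 ⊗ₖ W) := by
    rw [conjTranspose_kronecker]
    simp only [mul_assoc, ← mul_kronecker_mul, one_mul, mul_one]
    simp only [← mul_assoc, ← mul_kronecker_mul, one_mul, mul_one]
  rw [hsplit, trRight_mul_one_kronecker, ← mul_assoc, ← mul_kronecker_mul, one_mul,
    ← star_eq_conjTranspose, Unitary.mul_star_self_of_mem hW, one_kronecker_one, one_mul,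
    trRight_kronecker_one_mul_mul]

lemma trLeft_conjTranspose_kronecker_mul_mul [Fintype ι] [DecidableEq ι] [Fintype κ]
    [DecidableEq κ] {V : Matrix ι ι ℂ} (hV : V ∈ unitaryGroup ι ℂ)
    (W : Matrix κ κ ℂ) (X : Matrix (ι × κ) (ι × κ) ℂ) :
    trLeft ((V ⊗ₖ W)ᴴ * X * (V ⊗ₖ W)) = Wᴴ * trLeft X * W := by
  have hswap : ((V ⊗ₖ W)ᴴ * X * (V ⊗ₖ W)).submatrix Prod.swap Prod.swap
      = (W ⊗ₖ V)ᴴ * X.submatrix Prod.swap Prod.swap * (W ⊗ₖ V) := by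
    rw [← kronecker_submatrix_swap V W, conjTranspose_submatrix]
    simp only [← Equiv.coe_prodComm, submatrix_mul_equiv]
  rw [trLeft_eq_trRight_submatrix_swap, hswap, trRight_conjTranspose_kronecker_mul_mul W hV]
  rfl

lemma vnEntropy_le_vnEntropy_trRight_add_vnEntropy_trLeft [Fintype ι] [DecidableEq ι]
    [Fintype κ] [DecidableEq κ] {τ : Matrix (ι × κ) (ι × κ) ℂ}
    (hτ : τ.PosSemidef) (htr : τ.trace = 1) :
    vnEntropy τ ≤ vnEntropy (trRight τ) + vnEntropy (trLeft τ) := by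
  have hS := trRight_isHermitian hτ.1
  have hC := trLeft_isHermitian hτ.1
  set V : Matrix ι ι ℂ := (hS.eigenvectorUnitary : Matrix ι ι ℂ)
  set W : Matrix κ κ ℂ := (hC.eigenvectorUnitary : Matrix κ κ ℂ)
  have hVW : V ⊗ₖ W ∈ unitaryGroup (ι × κ) ℂ :=
    kronecker_mem_unitary hS.eigenvectorUnitary.2 hC.eigenvectorUnitary.2
  set M := (V ⊗ₖ W)ᴴ * τ * (V ⊗ₖ W)
  have hM : M.PosSemidef := hτ.conjTranspose_mul_mul_same _
  have hMS : trRight M = diagonal (RCLike.ofReal ∘ hS.eigenvalues) := by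
    rw [trRight_conjTranspose_kronecker_mul_mul V hC.eigenvectorUnitary.2,
      ← hS.conjStarAlgAut_star_eigenvectorUnitary, Unitary.conjStarAlgAut_apply,
      Unitary.coe_star, star_star, star_eq_conjTranspose]
  have hMC : trLeft M = diagonal (RCLike.ofReal ∘ hC.eigenvalues) := by
    rw [trLeft_conjTranspose_kronecker_mul_mul hS.eigenvectorUnitary.2,
      ← hC.conjStarAlgAut_star_eigenvectorUnitary, Unitary.conjStarAlgAut_apply,
      Unitary.coe_star, star_star, star_eq_conjTranspose]
  set r : ι → κ → ℝ := fun a b => (M (a, b) (a, b)).re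
  have hrS (a : ι) : ∑ b, r a b = hS.eigenvalues a := by
    simpa [trRight, r, Complex.re_sum] using congrArg (fun N => (N a a).re) hMS
  have hrC (b : κ) : ∑ a, r a b = hC.eigenvalues b := by
    simpa [trLeft, r, Complex.re_sum] using congrArg (fun N => (N b b).re) hMC
  have hrsum : ∑ a, ∑ b, r a b = 1 := by
    simp_rw [hrS]; exact hS.sum_eigenvalues_eq_one ((trace_trRight τ).trans htr)
  have hMτ : vnEntropy M = vnEntropy τ := by
    simpa [M, star_eq_conjTranspose] using vnEntropy_unitary_conj (Unitary.star_mem hVW) hτ.1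
  calc vnEntropy τ = vnEntropy M := hMτ.symm
    _ ≤ ∑ a, ∑ b, negMulLog (r a b) :=
        (vnEntropy_le_sum_negMulLog_re_diag hM).trans_eq (Fintype.sum_prod_type _)
    _ ≤ ∑ a, negMulLog (∑ b, r a b) + ∑ b, negMulLog (∑ a, r a b) :=
        sum_negMulLog_le_sum_negMulLog_marginals r
          (fun a b => (Complex.nonneg_iff.mp hM.diag_nonneg).1) hrsum
    _ = vnEntropy (trRight τ) + vnEntropy (trLeft τ) := by
        simp_rw [hrS, hrC, vnEntropy_of_isHermitian hS, vnEntropy_of_isHermitian hC]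

/-- If `τ = U(ρ_S ⊗ ω_C)U†` and `tr_S τ = ω_C`, then the entropy increase on
`S` equals the mutual information `I(S:C)_τ`; in particular it is
nonnegative. -/
theorem entropy_increase_is_mutual_information {n m : ℕ}
    (U : Matrix (Fin n × Fin m) (Fin n × Fin m) ℂ)
    (hU : U ∈ Matrix.unitaryGroup (Fin n × Fin m) ℂ)
    (ρS : Matrix (Fin n) (Fin n) ℂ) (ωC : Matrix (Fin m) (Fin m) ℂ)
    (hρ : IsDensity ρS) (hω : IsDensity ωC)
    (τ : Matrix (Fin n × Fin m) (Fin n × Fin m) ℂ)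
    (hτ : τ = U * (ρS ⊗ₖ ωC) * Uᴴ)
    (hC : trLeft τ = ωC) :
    vnEntropy (trRight τ) - vnEntropy ρS
      = vnEntropy (trRight τ) + vnEntropy (trLeft τ) - vnEntropy τ ∧
    vnEntropy ρS ≤ vnEntropy (trRight τ) := by
  have hτ_psd : τ.PosSemidef := hτ ▸ (hρ.1.kronecker hω.1).mul_mul_conjTranspose_same U
  have hτ_tr : τ.trace = 1 := by
    rw [hτ, trace_mul_cycle, ← star_eq_conjTranspose, Unitary.star_mul_self_of_mem hU, one_mul,
      trace_kronecker, hρ.2, hω.2, mul_one]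
  have hτ_entropy : vnEntropy τ = vnEntropy ρS + vnEntropy ωC := by
    rw [hτ, vnEntropy_unitary_conj hU (hρ.1.1.kronecker hω.1.1),
      vnEntropy_kronecker hρ.1.1 hω.1.1 hρ.2 hω.2]
  have hsub := vnEntropy_le_vnEntropy_trRight_add_vnEntropy_trLeft hτ_psd hτ_tr
  rw [hC, hτ_entropy] at hsub ⊢
  exact ⟨by ring, by linarith⟩
end

section
/- Rank is monotone under correlated-catalytic unitary transformations: under the assumptions that tr_C[U(ρ_S ⊗ ω_C)U†] = σ_S and tr_S[U(ρ_S ⊗ ω_C)U†] = ω_C for a unitary U, it holds that rank(σ_S) ≥ rank(ρ_S). -/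
open Matrix Kronecker
open scoped ComplexOrder Classical

/-
The state `τ = U (ρ ⊗ ω) U†` is positive semidefinite with marginals `σ` and `ω`. Positivity
forces `τ` to vanish on `ker σ ⊗ ℂᵐ` and on `ℂⁿ ⊗ ker ω`, so `τ = τ (P ⊗ Q)` for matrices
`P`, `Q` acting as the identity modulo these kernels with `rank P ≤ rank σ`, `rank Q ≤ rank ω`.
Hence `rank ρ · rank ω = rank τ ≤ rank σ · rank ω`, and `rank ω > 0` since `tr ω = 1`.
-/

theorem TensorProduct.finrank_range_map {K V W V' W' : Type*} [Field K]
    [AddCommGroup V] [Module K V] [AddCommGroup W] [Module K W]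
    [AddCommGroup V'] [Module K V'] [AddCommGroup W'] [Module K W']
    (f : V →ₗ[K] V') (g : W →ₗ[K] W') :
    Module.finrank K (LinearMap.range (map f g)) =
      Module.finrank K (LinearMap.range f) * Module.finrank K (LinearMap.range g) := by
  have hfactor : map f g = mapIncl (LinearMap.range f) (LinearMap.range g) ∘ₗ
      map f.rangeRestrict g.rangeRestrict := by
    rw [← map_comp]; rfl
  rw [hfactor, LinearMap.range_comp_of_range_eq_top _ (LinearMap.range_eq_top.mpr
      (map_surjective f.surjective_rangeRestrict g.surjective_rangeRestrict)),
    LinearMap.finrank_range_of_inj (map_injective_of_flat_flat _ _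
      (Submodule.injective_subtype _) (Submodule.injective_subtype _)),
    Module.finrank_tensorProduct]

theorem Matrix.rank_kronecker {K m n p q : Type*} [Field K] [Fintype m] [Fintype n] [Fintype p]
    [Fintype q] [DecidableEq n] [DecidableEq q] (A : Matrix m n K) (B : Matrix p q K) :
    (A ⊗ₖ B).rank = A.rank * B.rank := by
  rw [rank_eq_finrank_range_toLin _ ((Pi.basisFun K m).tensorProduct (Pi.basisFun K p))
      ((Pi.basisFun K n).tensorProduct (Pi.basisFun K q)), toLin_kronecker,
    TensorProduct.finrank_range_map, ← rank_eq_finrank_range_toLin, ← rank_eq_finrank_range_toLin]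

theorem Matrix.exists_mul_eq_self_rank_le {K n : Type*} [Field K] [Fintype n] [DecidableEq n]
    (A : Matrix n n K) : ∃ P : Matrix n n K, A * P = A ∧ P.rank ≤ A.rank := by
  obtain ⟨g, hg⟩ := (toLin' A).rangeRestrict.exists_rightInverse_of_surjective
    (LinearMap.range_rangeRestrict _)
  refine ⟨LinearMap.toMatrix' (g ∘ₗ (toLin' A).rangeRestrict), ?_, ?_⟩
  · apply toLin'.injective
    rw [toLin'_mul, toLin'_toMatrix']
    refine LinearMap.ext fun x => ?_
    exact congrArg Subtype.val (LinearMap.congr_fun hg ((toLin' A).rangeRestrict x))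
  · rw [rank, ← toLin'_apply', toLin'_toMatrix', LinearMap.range_comp]
    exact (Submodule.finrank_map_le _ _).trans (Submodule.finrank_le _)

theorem Matrix.rank_pos_of_ne_zero {K m n : Type*} [Field K] [Fintype n] [DecidableEq n]
    {A : Matrix m n K} (hA : A ≠ 0) : 0 < A.rank := by
  refine Nat.pos_of_ne_zero fun h => hA ?_
  rw [rank, Submodule.finrank_eq_zero, LinearMap.range_eq_bot, ← toLin'_apply',
    ← map_zero toLin'] at h
  exact toLin'.injective h

theorem Matrix.rank_unitary_conj {n R : Type*} [Fintype n] [DecidableEq n] [CommRing R]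
    [StarRing R] {U : Matrix n n R} (hU : U ∈ unitaryGroup n R) (A : Matrix n n R) :
    (U * A * Uᴴ).rank = A.rank := by
  have hUH : IsUnit Uᴴ.det := UnitaryGroup.det_isUnit (star ⟨U, hU⟩)
  rw [rank_mul_eq_left_of_isUnit_det _ _ hUH,
    rank_mul_eq_right_of_isUnit_det _ _ (UnitaryGroup.det_isUnit ⟨U, hU⟩)]

theorem Matrix.PosSemidef.mul_eq_zero_of_trace_conjTranspose_mul_mul_eq_zero {𝕜 n m : Type*}
    [RCLike 𝕜] [Fintype n] [Fintype m] {τ : Matrix n n 𝕜} (hτ : τ.PosSemidef) {M : Matrix n m 𝕜}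
    (h : (Mᴴ * τ * M).trace = 0) : τ * M = 0 := by
  open MatrixOrder in
  obtain ⟨B, rfl⟩ := CStarAlgebra.nonneg_iff_eq_star_mul_self.mp hτ.nonneg
  rw [star_eq_conjTranspose] at h ⊢
  have hBM : B * M = 0 := by
    rwa [Matrix.mul_assoc, Matrix.mul_assoc, ← Matrix.mul_assoc Mᴴ, ← conjTranspose_mul,
      trace_conjTranspose_mul_self_eq_zero_iff] at h
  rw [Matrix.mul_assoc, hBM, Matrix.mul_zero]

section PartialTrace

variable {ι κ : Type} [Fintype ι] [Fintype κ]

theorem trace_mul_kronecker_one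
    (τ : Matrix (ι × κ) (ι × κ) ℂ) (A : Matrix ι ι ℂ) :
    (τ * (A ⊗ₖ (1 : Matrix κ κ ℂ))).trace = (trRight τ * A).trace := by
  simp only [trace, diag, mul_apply, trRight, Fintype.sum_prod_type, kroneckerMap_apply, one_apply,
    mul_ite, mul_one, mul_zero, Finset.sum_ite_eq', Finset.mem_univ, if_true, Finset.sum_mul]
  exact Finset.sum_congr rfl fun _ _ => Finset.sum_comm

theorem trace_mul_one_kronecker
    (τ : Matrix (ι × κ) (ι × κ) ℂ) (B : Matrix κ κ ℂ) :
    (τ * ((1 : Matrix ι ι ℂ) ⊗ₖ B)).trace = (trLeft τ * B).trace := by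
  simp only [trace, diag, mul_apply, trLeft, Fintype.sum_prod_type, kroneckerMap_apply, one_apply,
    ite_mul, one_mul, zero_mul, mul_ite, mul_zero, Finset.sum_ite_irrel, Finset.sum_const_zero,
    Finset.sum_ite_eq', Finset.mem_univ, if_true, Finset.sum_mul]
  rw [Finset.sum_comm]
  exact Finset.sum_congr rfl fun _ _ => Finset.sum_comm

theorem Matrix.PosSemidef.mul_kronecker_one_eq_self
    {τ : Matrix (ι × κ) (ι × κ) ℂ} (hτ : τ.PosSemidef) {P : Matrix ι ι ℂ}
    (hP : trRight τ * P = trRight τ) : τ * (P ⊗ₖ (1 : Matrix κ κ ℂ)) = τ := by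
  have hker : trRight τ * (1 - P) = 0 := by rw [Matrix.mul_sub, Matrix.mul_one, hP, sub_self]
  -- For `M = (1 - P) ⊗ 1`, `tr (Mᴴ τ M) = tr (trRight τ * (1 - P) * (1 - P)ᴴ) = 0`.
  have hzero : τ * ((1 - P) ⊗ₖ (1 : Matrix κ κ ℂ)) = 0 := by
    refine hτ.mul_eq_zero_of_trace_conjTranspose_mul_mul_eq_zero ?_
    rw [trace_mul_cycle, trace_mul_comm, conjTranspose_kronecker, conjTranspose_one,
      ← mul_kronecker_mul, Matrix.mul_one, trace_mul_kronecker_one, ← Matrix.mul_assoc, hker,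
      Matrix.zero_mul, trace_zero]
  calc τ * (P ⊗ₖ 1) = τ * (P ⊗ₖ 1 + (1 - P) ⊗ₖ 1) := by rw [Matrix.mul_add, hzero, add_zero]
    _ = τ := by rw [← add_kronecker, add_sub_cancel, one_kronecker_one, Matrix.mul_one]

theorem Matrix.PosSemidef.mul_one_kronecker_eq_self
    {τ : Matrix (ι × κ) (ι × κ) ℂ} (hτ : τ.PosSemidef) {Q : Matrix κ κ ℂ}
    (hQ : trLeft τ * Q = trLeft τ) : τ * ((1 : Matrix ι ι ℂ) ⊗ₖ Q) = τ := by
  have hker : trLeft τ * (1 - Q) = 0 := by rw [Matrix.mul_sub, Matrix.mul_one, hQ, sub_self]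
  have hzero : τ * ((1 : Matrix ι ι ℂ) ⊗ₖ (1 - Q)) = 0 := by
    refine hτ.mul_eq_zero_of_trace_conjTranspose_mul_mul_eq_zero ?_
    rw [trace_mul_cycle, trace_mul_comm, conjTranspose_kronecker, conjTranspose_one,
      ← mul_kronecker_mul, Matrix.mul_one, trace_mul_one_kronecker, ← Matrix.mul_assoc, hker,
      Matrix.zero_mul, trace_zero]
  calc τ * (1 ⊗ₖ Q) = τ * (1 ⊗ₖ Q + 1 ⊗ₖ (1 - Q)) := by rw [Matrix.mul_add, hzero, add_zero]
    _ = τ := by rw [← kronecker_add, add_sub_cancel, one_kronecker_one, Matrix.mul_one]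

theorem Matrix.PosSemidef.rank_le_rank_trRight_mul_rank_trLeft {τ : Matrix (ι × κ) (ι × κ) ℂ}
    (hτ : τ.PosSemidef) : τ.rank ≤ (trRight τ).rank * (trLeft τ).rank := by
  obtain ⟨P, hP, hPrank⟩ := (trRight τ).exists_mul_eq_self_rank_le
  obtain ⟨Q, hQ, hQrank⟩ := (trLeft τ).exists_mul_eq_self_rank_le
  have hτPQ : τ * (P ⊗ₖ Q) = τ := by
    calc τ * (P ⊗ₖ Q) = τ * (P ⊗ₖ 1) * (1 ⊗ₖ Q) := by
          rw [Matrix.mul_assoc, ← mul_kronecker_mul, Matrix.mul_one, Matrix.one_mul]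
      _ = τ := by rw [hτ.mul_kronecker_one_eq_self hP, hτ.mul_one_kronecker_eq_self hQ]
  calc τ.rank = (τ * (P ⊗ₖ Q)).rank := by rw [hτPQ]
    _ ≤ (P ⊗ₖ Q).rank := rank_mul_le_right _ _
    _ = P.rank * Q.rank := rank_kronecker P Q
    _ ≤ (trRight τ).rank * (trLeft τ).rank := Nat.mul_le_mul hPrank hQrank

end PartialTrace

theorem rank_correlated_catalytic_general {n m : ℕ}
    (U : Matrix (Fin n × Fin m) (Fin n × Fin m) ℂ)
    (hU : U ∈ Matrix.unitaryGroup (Fin n × Fin m) ℂ)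
    (ρS σS : Matrix (Fin n) (Fin n) ℂ) (ωC : Matrix (Fin m) (Fin m) ℂ)
    (hρ : IsDensity ρS) (hω : IsDensity ωC)
    (hS : trRight (U * (ρS ⊗ₖ ωC) * Uᴴ) = σS)
    (hC : trLeft (U * (ρS ⊗ₖ ωC) * Uᴴ) = ωC) :
    ρS.rank ≤ σS.rank := by
  have hτ : (U * (ρS ⊗ₖ ωC) * Uᴴ).PosSemidef :=
    (hρ.1.kronecker hω.1).mul_mul_conjTranspose_same U
  have hω_rank : 0 < ωC.rank := rank_pos_of_ne_zero fun h => by simpa [h] using hω.2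
  have hrank := hτ.rank_le_rank_trRight_mul_rank_trLeft
  rw [hS, hC, rank_unitary_conj hU, rank_kronecker] at hrank
  exact Nat.le_of_mul_le_mul_right hrank hω_rank

/-- Rank is monotone under correlated-catalytic unitary transformations:
`rank σ_S ≥ rank ρ_S`. -/
theorem rank_correlated_catalytic {n m : ℕ}
    (U : Matrix (Fin n × Fin m) (Fin n × Fin m) ℂ)
    (hU : U ∈ Matrix.unitaryGroup (Fin n × Fin m) ℂ)
    (ρS σS : Matrix (Fin n) (Fin n) ℂ) (ωC : Matrix (Fin m) (Fin m) ℂ)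
    (hρ : IsDensity ρS) (hσ : IsDensity σS) (hω : IsDensity ωC)
    (hS : trRight (U * (ρS ⊗ₖ ωC) * Uᴴ) = σS)
    (hC : trLeft (U * (ρS ⊗ₖ ωC) * Uᴴ) = ωC) :
    ρS.rank ≤ σS.rank :=
  rank_correlated_catalytic_general U hU ρS σS ωC hρ hω hS hC
end
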